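/- arXiv:1304.3322 — 6 statements merged into one kernel-verified Lean document; each statement's English description precedes it below -/
import Mathlib

section
/- Let V₁, V₂, V₃ be vector spaces over 𝔽, and for each i = 1, 2, 3 let xᵢ, yᵢ ∈ Vᵢ be linearly independent vectors. Then the tensor T := x₁⊗x₂⊗x₃ + y₁⊗x₂⊗x₃ + x₁⊗y₂⊗x₃ + x₁⊗x₂⊗y₃ ∈ V₁⊗V₂⊗V₃ cannot be written as v₁⊗v₂⊗v₃ + w₁⊗w₂⊗w₃ for any vectors vᵢ, wᵢ ∈ Vᵢ; in other words, the tensor rank of T is greater than 2. -/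
/-!
Pairing with linear functionals that separate `xᵢ` from `yᵢ` turns a decomposition
`T = v₁⊗v₂⊗v₃ + w₁⊗w₂⊗w₃` into eight polynomial equations: the coordinates `(a, b, c)` of the
`vᵢ` and `(d, e, f)` of the `wᵢ` would write the coefficient cube of `T` (the "W-state") as a sum
of two products. Slicing along the third factor, the pencil `M₀ + t M₁` with
`M₀ = [[1, 1], [1, 0]]` and `M₁ = [[1, 0], [0, 0]]` has constant determinant `-1`, whereas the
decomposition gives it determinant `(c₀ + t c₁)(f₀ + t f₁) m` with `m = det[a d] det[b e]`.
Comparing coefficients of `t` forces `c₁ = f₁ = 0`, i.e. `M₁ = 0`, which is absurd.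
-/

open TensorProduct

theorem LinearIndependent.exists_dual_apply_eq_ite {ι K V : Type*} [Field K] [AddCommGroup V]
    [Module K V] [DecidableEq ι] {v : ι → V} (hv : LinearIndependent K v) :
    ∃ f : ι → Module.Dual K V, ∀ i j, f i (v j) = if i = j then 1 else 0 := by
  choose f hf using fun i ↦ LinearMap.exists_extend ((Module.Basis.span hv).coord i)
  refine ⟨f, fun i j ↦ ?_⟩
  simpa [Module.Basis.span_apply, Finsupp.single_apply, eq_comm]
    using LinearMap.congr_fun (hf i) (Module.Basis.span hv j)

theorem LinearIndependent.exists_dual_pair {K V : Type*} [Field K] [AddCommGroup V]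
    [Module K V] {x y : V} (h : LinearIndependent K ![x, y]) :
    ∃ f g : Module.Dual K V, f x = 1 ∧ f y = 0 ∧ g x = 0 ∧ g y = 1 := by
  obtain ⟨f, hf⟩ := h.exists_dual_apply_eq_ite
  exact ⟨f 0, f 1, by simpa using hf 0 0, by simpa using hf 0 1, by simpa using hf 1 0,
    by simpa using hf 1 1⟩

theorem false_of_wCoeffs_eq_two_products {F : Type*} [Field F]
    (a₀ a₁ b₀ b₁ c₀ c₁ d₀ d₁ e₀ e₁ f₀ f₁ : F)
    (h₀₀₀ : a₀ * (b₀ * c₀) + d₀ * (e₀ * f₀) = 1)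
    (h₁₀₀ : a₁ * (b₀ * c₀) + d₁ * (e₀ * f₀) = 1)
    (h₀₁₀ : a₀ * (b₁ * c₀) + d₀ * (e₁ * f₀) = 1)
    (h₀₀₁ : a₀ * (b₀ * c₁) + d₀ * (e₀ * f₁) = 1)
    (h₁₁₀ : a₁ * (b₁ * c₀) + d₁ * (e₁ * f₀) = 0)
    (h₁₀₁ : a₁ * (b₀ * c₁) + d₁ * (e₀ * f₁) = 0)
    (h₀₁₁ : a₀ * (b₁ * c₁) + d₀ * (e₁ * f₁) = 0)
    (h₁₁₁ : a₁ * (b₁ * c₁) + d₁ * (e₁ * f₁) = 0) : False := by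
  set m := (a₀ * d₁ - a₁ * d₀) * (b₀ * e₁ - b₁ * e₀)
  have hm₀ : c₀ * f₀ * m = -1 := by
    linear_combination (a₁ * b₁ * c₀ + d₁ * e₁ * f₀) * h₀₀₀ + h₁₁₀
      - (a₀ * b₁ * c₀ + d₀ * e₁ * f₀) * h₁₀₀ - h₀₁₀
  have hm₁ : (c₀ * f₁ + c₁ * f₀) * m = 0 := by
    linear_combination (a₁ * b₁ * c₁ + d₁ * e₁ * f₁) * h₀₀₀ + h₁₁₁
      + (a₁ * b₁ * c₀ + d₁ * e₁ * f₀) * h₀₀₁ + h₁₁₀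
      - (a₀ * b₁ * c₁ + d₀ * e₁ * f₁) * h₁₀₀ - h₀₁₁
      - (a₀ * b₁ * c₀ + d₀ * e₁ * f₀) * h₁₀₁
  have hm₂ : c₁ * f₁ * m = 0 := by
    linear_combination (a₁ * b₁ * c₁ + d₁ * e₁ * f₁) * h₀₀₁ + h₁₁₁
      - (a₀ * b₁ * c₁ + d₀ * e₁ * f₁) * h₁₀₁
  have hcfm : c₀ * f₀ * m ≠ 0 := by rw [hm₀]; exact neg_ne_zero.mpr one_ne_zero
  have hm : m ≠ 0 := right_ne_zero_of_mul hcfm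
  have hc₀ : c₀ ≠ 0 := left_ne_zero_of_mul (left_ne_zero_of_mul hcfm)
  have hf₀ : f₀ ≠ 0 := right_ne_zero_of_mul (left_ne_zero_of_mul hcfm)
  have hf₁ : f₁ = 0 := by
    have : (c₀ * f₁) ^ 2 * m = 0 := by linear_combination (c₀ * f₁) * hm₁ - c₀ * f₀ * hm₂
    simpa [hm, hc₀] using this
  have hc₁ : c₁ = 0 := by simpa [hf₁, hm, hf₀] using hm₁
  simp [hc₁, hf₁] at h₀₀₁

theorem stmt_0_general (F : Type*) [Field F]
    (V₁ V₂ V₃ : Type*)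
    [AddCommGroup V₁] [Module F V₁] [AddCommGroup V₂] [Module F V₂]
    [AddCommGroup V₃] [Module F V₃]
    (x₁ y₁ : V₁) (x₂ y₂ : V₂) (x₃ y₃ : V₃)
    (h₁ : LinearIndependent F ![x₁, y₁])
    (h₂ : LinearIndependent F ![x₂, y₂])
    (h₃ : LinearIndependent F ![x₃, y₃]) :
    ∀ (v₁ w₁ : V₁) (v₂ w₂ : V₂) (v₃ w₃ : V₃),
      x₁ ⊗ₜ[F] (x₂ ⊗ₜ[F] x₃) + y₁ ⊗ₜ[F] (x₂ ⊗ₜ[F] x₃)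
        + x₁ ⊗ₜ[F] (y₂ ⊗ₜ[F] x₃) + x₁ ⊗ₜ[F] (x₂ ⊗ₜ[F] y₃)
        ≠ v₁ ⊗ₜ[F] (v₂ ⊗ₜ[F] v₃) + w₁ ⊗ₜ[F] (w₂ ⊗ₜ[F] w₃) := by
  intro v₁ w₁ v₂ w₂ v₃ w₃ heq
  obtain ⟨f₁, g₁, hf₁x, hf₁y, hg₁x, hg₁y⟩ := h₁.exists_dual_pair
  obtain ⟨f₂, g₂, hf₂x, hf₂y, hg₂x, hg₂y⟩ := h₂.exists_dual_pair
  obtain ⟨f₃, g₃, hf₃x, hf₃y, hg₃x, hg₃y⟩ := h₃.exists_dual_pair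
  have eval : ∀ (p : Module.Dual F V₁) (q : Module.Dual F V₂) (r : Module.Dual F V₃),
      p v₁ * (q v₂ * r v₃) + p w₁ * (q w₂ * r w₃)
        = p x₁ * (q x₂ * r x₃) + p y₁ * (q x₂ * r x₃)
          + p x₁ * (q y₂ * r x₃) + p x₁ * (q x₂ * r y₃) := fun p q r ↦ by
    simpa [dualDistrib_apply] using
      congrArg (dualDistrib F _ _ (p ⊗ₜ dualDistrib F _ _ (q ⊗ₜ r))) heq.symm
  refine false_of_wCoeffs_eq_two_products (f₁ v₁) (g₁ v₁) (f₂ v₂) (g₂ v₂) (f₃ v₃) (g₃ v₃)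
    (f₁ w₁) (g₁ w₁) (f₂ w₂) (g₂ w₂) (f₃ w₃) (g₃ w₃) ?_ ?_ ?_ ?_ ?_ ?_ ?_ ?_
  all_goals
    rw [eval]
    simp [hf₁x, hf₁y, hg₁x, hg₁y, hf₂x, hf₂y, hg₂x, hg₂y, hf₃x, hf₃y, hg₃x, hg₃y]

/-- If `xᵢ, yᵢ ∈ Vᵢ` are linearly independent for `i = 1, 2, 3`, then the tensor
`T = x₁⊗x₂⊗x₃ + y₁⊗x₂⊗x₃ + x₁⊗y₂⊗x₃ + x₁⊗x₂⊗y₃` cannot be written as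
`v₁⊗v₂⊗v₃ + w₁⊗w₂⊗w₃`; i.e. the rank of `T` is greater than 2. -/
theorem stmt_0 (F : Type*) [Field F] [CharZero F] [IsAlgClosed F]
    (V₁ V₂ V₃ : Type*)
    [AddCommGroup V₁] [Module F V₁] [AddCommGroup V₂] [Module F V₂]
    [AddCommGroup V₃] [Module F V₃]
    (x₁ y₁ : V₁) (x₂ y₂ : V₂) (x₃ y₃ : V₃)
    (h₁ : LinearIndependent F ![x₁, y₁])
    (h₂ : LinearIndependent F ![x₂, y₂])
    (h₃ : LinearIndependent F ![x₃, y₃]) :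
    ∀ (v₁ w₁ : V₁) (v₂ w₂ : V₂) (v₃ w₃ : V₃),
      x₁ ⊗ₜ[F] (x₂ ⊗ₜ[F] x₃) + y₁ ⊗ₜ[F] (x₂ ⊗ₜ[F] x₃)
        + x₁ ⊗ₜ[F] (y₂ ⊗ₜ[F] x₃) + x₁ ⊗ₜ[F] (x₂ ⊗ₜ[F] y₃)
        ≠ v₁ ⊗ₜ[F] (v₂ ⊗ₜ[F] v₃) + w₁ ⊗ₜ[F] (w₂ ⊗ₜ[F] w₃) :=
  stmt_0_general F V₁ V₂ V₃ x₁ y₁ x₂ y₂ x₃ y₃ h₁ h₂ h₃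
end

section
/- Let n be even, let J be an invertible skew-symmetric n×n matrix over 𝔽, and let A be a skew-symmetric n×n matrix with trace(J·A) = 0 and rank A = 2r. Then there exist vectors x₁,…,x_r, y₁,…,y_r, all lying in the column space of A, such that A = Σᵢ₌₁^r (xᵢ yᵢᵀ − yᵢ xᵢᵀ) and xᵢᵀ J yᵢ = 0 for every i. -/
/-!
Induction on `r`. Since `trace (J * A) = 0` and `J` is invertible, a nonzero skew `A` admits `u`,
`v` with `u ⬝ᵥ A *ᵥ v = 1` whose images `A *ᵥ u`, `A *ᵥ v` are `J`-orthogonal: otherwise every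
`A *ᵥ v` would be proportional to `A *ᵥ J *ᵥ A *ᵥ v`, so `A * J` would act on the support of `A`
as a scalar `a`, and `a⁻¹ • (J * A)` would be an idempotent of trace zero, forcing `A = 0`.
Subtracting `wedge (A *ᵥ u) (A *ᵥ v)` from `A` keeps it skew, keeps `trace (J * A) = 0`, splits off
the plane spanned by `A *ᵥ u` and `A *ᵥ v` from the support, and so lowers the rank by two.
-/

open Matrix

namespace Matrix

variable {ι R F : Type*} [CommRing R] [Field F]

def wedge (x y : ι → R) : Matrix ι ι R := vecMulVec x y - vecMulVec y x

theorem transpose_wedge (x y : ι → R) : (wedge x y)ᵀ = -wedge x y := by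
  simp [wedge, transpose_vecMulVec]

theorem transpose_sub_wedge {A : Matrix ι ι R} (hA : Aᵀ = -A) (x y : ι → R) :
    (A - wedge x y)ᵀ = -(A - wedge x y) := by
  rw [transpose_sub, hA, transpose_wedge, neg_sub, sub_neg_eq_add, neg_add_eq_sub]

theorem eq_zero_of_rank_eq_zero {m : Type*} [Fintype ι] [DecidableEq ι] {A : Matrix m ι F}
    (h : A.rank = 0) : A = 0 := by
  rw [rank, Submodule.finrank_eq_zero, LinearMap.range_eq_bot, ← toLin'_apply'] at h
  exact toLin'.injective (by simpa using h)

theorem eq_zero_of_isIdempotentElem_of_trace_eq_zero [Fintype ι] [DecidableEq ι] [CharZero F]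
    {T : Matrix ι ι F} (hT : IsIdempotentElem T) (htr : T.trace = 0) : T = 0 := by
  have hT' : IsIdempotentElem (toLin' T) := hT.map toLinAlgEquiv'
  exact toLin'.injective
    (by simpa [htr] using LinearMap.IsIdempotentElem.eq_zero_of_trace_eq_zero hT')

theorem exists_smul_eq_of_dotProduct_eq_zero_imp [Fintype ι] [DecidableEq ι] {a b : ι → F}
    (h : ∀ u, a ⬝ᵥ u = 0 → b ⬝ᵥ u = 0) : ∃ c : F, b = c • a := by
  have hker : ⨅ _ : Unit, LinearMap.ker (dotProductEquiv F ι a) ≤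
      LinearMap.ker (dotProductEquiv F ι b) := fun u hu => by
    simpa using h u (by simpa using hu)
  obtain ⟨c, hc⟩ :=
    Submodule.mem_span_singleton.mp (by simpa using mem_span_of_iInf_ker_le_ker hker)
  exact ⟨c, (dotProductEquiv F ι).injective (by rw [map_smul, hc])⟩

variable [Fintype ι]

theorem dotProduct_mulVec_comm_of_transpose_eq_neg {A : Matrix ι ι R} (hA : Aᵀ = -A)
    (u v : ι → R) : u ⬝ᵥ A *ᵥ v = -(v ⬝ᵥ A *ᵥ u) := by
  rw [dotProduct_mulVec, ← mulVec_transpose, hA, neg_mulVec, neg_dotProduct, dotProduct_comm]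

theorem dotProduct_mulVec_self_of_transpose_eq_neg [IsAddTorsionFree R] {A : Matrix ι ι R}
    (hA : Aᵀ = -A) (u : ι → R) : u ⬝ᵥ A *ᵥ u = 0 :=
  self_eq_neg.mp (dotProduct_mulVec_comm_of_transpose_eq_neg hA u u)

theorem wedge_mulVec (x y w : ι → R) : wedge x y *ᵥ w = (y ⬝ᵥ w) • x - (x ⬝ᵥ w) • y := by
  simp [wedge, sub_mulVec, vecMulVec_mulVec]

theorem trace_mul_wedge {J : Matrix ι ι R} (hJ : Jᵀ = -J) (x y : ι → R) :
    trace (J * wedge x y) = -2 * (x ⬝ᵥ J *ᵥ y) := by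
  rw [wedge, mul_sub, trace_sub, mul_vecMulVec, mul_vecMulVec, trace_vecMulVec, trace_vecMulVec,
    dotProduct_comm, dotProduct_comm (J *ᵥ y), dotProduct_mulVec_comm_of_transpose_eq_neg hJ]
  ring

theorem sub_wedge_mulVec (A : Matrix ι ι R) (u v w : ι → R) :
    (A - wedge (A *ᵥ u) (A *ᵥ v)) *ᵥ w =
      A *ᵥ (w - ((A *ᵥ v) ⬝ᵥ w) • u + ((A *ᵥ u) ⬝ᵥ w) • v) := by
  rw [sub_mulVec, wedge_mulVec, mulVec_add, mulVec_sub, mulVec_smul, mulVec_smul]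
  abel

section Normalized

variable [IsAddTorsionFree R] {A : Matrix ι ι R} {u v : ι → R}

theorem dotProduct_smul_mulVec_add_smul_mulVec (hA : Aᵀ = -A) (huv : u ⬝ᵥ A *ᵥ v = 1)
    (a b : R) :
    u ⬝ᵥ (a • A *ᵥ u + b • A *ᵥ v) = b ∧ v ⬝ᵥ (a • A *ᵥ u + b • A *ᵥ v) = -a := by
  simp only [dotProduct_add, dotProduct_smul, dotProduct_mulVec_self_of_transpose_eq_neg hA, huv,
    dotProduct_mulVec_comm_of_transpose_eq_neg hA v u, smul_eq_mul]
  constructor <;> ring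

theorem sub_wedge_mulVec_left (hA : Aᵀ = -A) (huv : u ⬝ᵥ A *ᵥ v = 1) :
    (A - wedge (A *ᵥ u) (A *ᵥ v)) *ᵥ u = 0 := by
  rw [sub_wedge_mulVec, dotProduct_comm, huv, dotProduct_comm,
    dotProduct_mulVec_self_of_transpose_eq_neg hA]
  simp

theorem sub_wedge_mulVec_right (hA : Aᵀ = -A) (huv : u ⬝ᵥ A *ᵥ v = 1) :
    (A - wedge (A *ᵥ u) (A *ᵥ v)) *ᵥ v = 0 := by
  rw [sub_wedge_mulVec, dotProduct_comm, dotProduct_mulVec_self_of_transpose_eq_neg hA,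
    dotProduct_comm, dotProduct_mulVec_comm_of_transpose_eq_neg hA, huv]
  simp

end Normalized

theorem rank_sub_wedge_add_two [CharZero F] {A : Matrix ι ι F} {u v : ι → F}
    (hA : Aᵀ = -A) (huv : u ⬝ᵥ A *ᵥ v = 1) :
    (A - wedge (A *ᵥ u) (A *ᵥ v)).rank + 2 = A.rank := by
  set A' := A - wedge (A *ᵥ u) (A *ᵥ v)
  set P := Submodule.span F (Set.range ![A *ᵥ u, A *ᵥ v])
  have hP : ∀ z ∈ P, ∃ a b : F, a • A *ᵥ u + b • A *ᵥ v = z := fun z hz => by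
    obtain ⟨c, rfl⟩ := (Submodule.mem_span_range_iff_exists_fun F).mp hz
    exact ⟨c 0, c 1, by simp [Fin.sum_univ_two]⟩
  have hindep : LinearIndependent F ![A *ᵥ u, A *ᵥ v] :=
    LinearIndependent.pair_iff.mpr fun a b h => by
      obtain ⟨h₁, h₂⟩ := dotProduct_smul_mulVec_add_smul_mulVec hA huv a b
      rw [h, dotProduct_zero] at h₁ h₂
      exact ⟨neg_eq_zero.mp h₂.symm, h₁.symm⟩
  -- `u` and `v` are orthogonal to the support of the skew matrix `A'`, which kills them.
  have hdisj : Disjoint (LinearMap.range A'.mulVecLin) P := by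
    rw [Submodule.disjoint_def]
    rintro _ ⟨w, rfl⟩ hz
    obtain ⟨a, b, hab⟩ := hP _ hz
    obtain ⟨h₁, h₂⟩ := dotProduct_smul_mulVec_add_smul_mulVec hA huv a b
    rw [hab, mulVecLin_apply, dotProduct_mulVec_comm_of_transpose_eq_neg
      (transpose_sub_wedge hA _ _), sub_wedge_mulVec_left hA huv, dotProduct_zero, neg_zero] at h₁
    rw [hab, mulVecLin_apply, dotProduct_mulVec_comm_of_transpose_eq_neg
      (transpose_sub_wedge hA _ _), sub_wedge_mulVec_right hA huv, dotProduct_zero, neg_zero] at h₂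
    rw [← hab, ← h₁, neg_eq_zero.mp h₂.symm, zero_smul, zero_smul, add_zero]
  have hsup : LinearMap.range A'.mulVecLin ⊔ P = LinearMap.range A.mulVecLin := by
    refine le_antisymm (sup_le ?_ ?_) ?_
    · rintro _ ⟨w, rfl⟩
      exact ⟨_, (sub_wedge_mulVec A u v w).symm⟩
    · rw [Submodule.span_le, Set.range_subset_iff]
      intro i
      fin_cases i
      exacts [⟨u, rfl⟩, ⟨v, rfl⟩]
    · rintro _ ⟨w, rfl⟩
      have hw : A *ᵥ w =
          A' *ᵥ w + ((A *ᵥ v) ⬝ᵥ w) • A *ᵥ u + (-((A *ᵥ u) ⬝ᵥ w)) • A *ᵥ v := by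
        simp only [A', sub_mulVec, wedge_mulVec]
        module
      rw [mulVecLin_apply, hw, add_assoc]
      exact Submodule.add_mem_sup ⟨w, rfl⟩ (Submodule.add_mem _
        (Submodule.smul_mem _ _ (Submodule.subset_span ⟨0, rfl⟩))
        (Submodule.smul_mem _ _ (Submodule.subset_span ⟨1, rfl⟩)))
  have := Submodule.finrank_sup_add_finrank_inf_eq (LinearMap.range A'.mulVecLin) P
  rw [hsup, hdisj.eq_bot, finrank_bot, add_zero, finrank_span_eq_card hindep] at this
  simpa [rank] using this.symm

theorem exists_ne_zero_mul_mul_eq_smul {J A : Matrix ι ι F} (hA0 : A ≠ 0)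
    (hcol : ∀ v, ∃ c : F, A *ᵥ v = c • A *ᵥ J *ᵥ A *ᵥ v) : ∃ a : F, a ≠ 0 ∧ A * J * A = a • A := by
  have hBW : ∀ w ∈ LinearMap.range A.mulVecLin,
      (A * J).mulVecLin w ∈ LinearMap.range A.mulVecLin := by
    rintro _ ⟨v, rfl⟩
    exact ⟨J *ᵥ A *ᵥ v, by simp [mulVec_mulVec]⟩
  -- Every vector of the support of `A` is an eigenvector of `A * J`.
  obtain ⟨a, ha⟩ := LinearMap.exists_eq_smul_id_of_forall_notLinearIndependent
    (f := (A * J).mulVecLin.restrict hBW) <| by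
    rintro ⟨_, v, rfl⟩ hli
    obtain ⟨c, hc⟩ := hcol v
    refine one_ne_zero (LinearIndependent.pair_iff.mp hli 1 (-c) (Subtype.ext ?_)).1
    simpa [sub_eq_add_neg] using sub_eq_zero.mpr hc
  have hAJA : A * J * A = a • A := ext_iff_mulVec.mpr fun v => by
    simpa [mulVec_mulVec, Matrix.mul_assoc, smul_mulVec] using
      congr_arg Subtype.val (LinearMap.congr_fun ha ⟨A *ᵥ v, v, rfl⟩)
  refine ⟨a, ?_, hAJA⟩
  rintro rfl
  refine hA0 (ext_iff_mulVec.mpr fun v => ?_)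
  obtain ⟨c, hc⟩ := hcol v
  rw [hc, mulVec_mulVec, mulVec_mulVec, hAJA]
  simp

variable [DecidableEq ι] [CharZero F] {J A : Matrix ι ι F}

theorem eq_zero_of_mul_mul_eq_smul (hJ : IsUnit J) (htr : trace (J * A) = 0) {a : F}
    (ha : a ≠ 0) (h : A * J * A = a • A) : A = 0 := by
  have hidem : IsIdempotentElem (a⁻¹ • (J * A)) := by
    rw [IsIdempotentElem, smul_mul_smul_comm, mul_assoc, ← mul_assoc A, h, mul_smul_comm,
      smul_smul, mul_assoc, inv_mul_cancel₀ ha, mul_one]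
  have hJA : J * A = 0 := by
    simpa [ha] using
      eq_zero_of_isIdempotentElem_of_trace_eq_zero hidem (by rw [trace_smul, htr, smul_zero])
  exact hJ.mul_right_eq_zero.mp hJA

theorem exists_dotProduct_mulVec_eq_one_and_isotropic (hJ : IsUnit J) (hA : Aᵀ = -A)
    (htr : trace (J * A) = 0) (hA0 : A ≠ 0) :
    ∃ u v, u ⬝ᵥ A *ᵥ v = 1 ∧ (A *ᵥ u) ⬝ᵥ J *ᵥ (A *ᵥ v) = 0 := by
  obtain ⟨u, v, huv, hiso⟩ : ∃ u v, u ⬝ᵥ A *ᵥ v ≠ 0 ∧ (A *ᵥ u) ⬝ᵥ J *ᵥ (A *ᵥ v) = 0 := by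
    by_contra! hbad
    have hcol : ∀ v, ∃ c : F, A *ᵥ v = c • A *ᵥ J *ᵥ A *ᵥ v := fun v =>
      exists_smul_eq_of_dotProduct_eq_zero_imp fun u hu => by
        by_contra h
        refine hbad u v (by rwa [dotProduct_comm] at h) ?_
        rw [dotProduct_comm, dotProduct_mulVec_comm_of_transpose_eq_neg hA, dotProduct_comm, hu,
          neg_zero]
    obtain ⟨a, ha, hAJA⟩ := exists_ne_zero_mul_mul_eq_smul hA0 hcol
    exact hA0 (eq_zero_of_mul_mul_eq_smul hJ htr ha hAJA)
  exact ⟨u, (u ⬝ᵥ A *ᵥ v)⁻¹ • v, by simp [mulVec_smul, huv], by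
    rw [mulVec_smul, mulVec_smul, dotProduct_smul, hiso, smul_zero]⟩

end Matrix

theorem stmt_7_general (F : Type*) [Field F] [CharZero F]
    (n r : ℕ) (J A : Matrix (Fin n) (Fin n) F)
    (hJskew : Jᵀ = -J) (hJinv : IsUnit J)
    (hAskew : Aᵀ = -A) (htr : trace (J * A) = 0) (hrank : A.rank = 2 * r) :
    ∃ x y : Fin r → (Fin n → F),
      (∀ i, ∃ u, A *ᵥ u = x i) ∧ (∀ i, ∃ u, A *ᵥ u = y i) ∧
      A = ∑ i, (vecMulVec (x i) (y i) - vecMulVec (y i) (x i)) ∧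
      ∀ i, x i ⬝ᵥ (J *ᵥ y i) = 0 := by
  induction r generalizing A with
  | zero =>
    obtain rfl := eq_zero_of_rank_eq_zero hrank
    exact ⟨finZeroElim, finZeroElim, finZeroElim, finZeroElim, by simp, finZeroElim⟩
  | succ r ih =>
    obtain ⟨u, v, huv, hiso⟩ := exists_dotProduct_mulVec_eq_one_and_isotropic hJinv hAskew htr
      (by rintro rfl; simp at hrank)
    obtain ⟨x, y, hx, hy, hsum, hxy⟩ := ih (A - wedge (A *ᵥ u) (A *ᵥ v))
      (transpose_sub_wedge hAskew _ _)
      (by rw [mul_sub, trace_sub, htr, trace_mul_wedge hJskew, hiso, mul_zero, sub_zero])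
      (by have := rank_sub_wedge_add_two hAskew huv; omega)
    have hsupp : ∀ z, (∃ w, (A - wedge (A *ᵥ u) (A *ᵥ v)) *ᵥ w = z) → ∃ w, A *ᵥ w = z :=
      fun z ⟨w, hw⟩ => ⟨_, (sub_wedge_mulVec A u v w).symm.trans hw⟩
    refine ⟨Fin.cons (A *ᵥ u) x, Fin.cons (A *ᵥ v) y, Fin.cases ⟨u, rfl⟩ fun i => hsupp _ (hx i),
      Fin.cases ⟨v, rfl⟩ fun i => hsupp _ (hy i), ?_, Fin.cases hiso hxy⟩
    rw [Fin.sum_univ_succ, Fin.cons_zero, Fin.cons_zero]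
    simp only [Fin.cons_succ]
    rw [← hsum, wedge]
    abel

/-- Let `n` be even, `J` an invertible skew-symmetric `n×n` matrix, and `A` a
skew-symmetric `n×n` matrix with `trace(J·A) = 0` and `rank A = 2r`. Then there are vectors
`x₁,…,x_r, y₁,…,y_r` in the column space of `A` with `A = Σᵢ (xᵢ yᵢᵀ − yᵢ xᵢᵀ)` and
`xᵢᵀ J yᵢ = 0` for every `i`. -/
theorem stmt_7 (F : Type*) [Field F] [CharZero F] [IsAlgClosed F]
    (n r : ℕ) (hn : Even n) (J A : Matrix (Fin n) (Fin n) F)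
    (hJskew : Jᵀ = -J) (hJinv : IsUnit J)
    (hAskew : Aᵀ = -A) (htr : trace (J * A) = 0) (hrank : A.rank = 2 * r) :
    ∃ x y : Fin r → (Fin n → F),
      (∀ i, ∃ u, A *ᵥ u = x i) ∧ (∀ i, ∃ u, A *ᵥ u = y i) ∧
      A = ∑ i, (vecMulVec (x i) (y i) - vecMulVec (y i) (x i)) ∧
      ∀ i, x i ⬝ᵥ (J *ᵥ y i) = 0 :=
  stmt_7_general F n r J A hJskew hJinv hAskew htr hrank
end

section
/- Let n be even, let J be an invertible skew-symmetric n×n matrix over 𝔽, and let A be a nonzero skew-symmetric n×n matrix with trace(J·A) = 0. Then there exist vectors u, v ∈ 𝔽ⁿ such that uᵀ A v ≠ 0 and (A u)ᵀ J (A v) = 0. -/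
/-!
If the claim failed, then for skew `A` the identity `(A u)ᵀ J (A v) = -uᵀ (A J A) v` shows that
`uᵀ (A J A) v = 0` forces `uᵀ A v = 0`. Two bilinear forms with nested null pairs are proportional,
so `A = c • A J A`. Then `P = c • J A` is idempotent with trace `c • trace (J A) = 0`, hence `P = 0`
in characteristic zero, and `A = A P = 0`.
-/

open Matrix

theorem LinearMap.exists_eq_smul_of_ker_le {K E : Type*} [Field K] [AddCommGroup E] [Module K E]
    {f g : E →ₗ[K] K} (h : ker f ≤ ker g) : ∃ c : K, g = c • f := by
  have hspan := mem_span_of_iInf_ker_le_ker (L := fun _ : Unit ↦ f) (by simpa using h)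
  rw [Set.range_const, Submodule.mem_span_singleton] at hspan
  obtain ⟨c, hc⟩ := hspan
  exact ⟨c, hc.symm⟩

theorem LinearMap.exists_eq_smul_of_forall_exists_eq_smul {K V W : Type*} [Field K]
    [AddCommGroup V] [Module K V] [AddCommGroup W] [Module K W] {f g : V →ₗ[K] W}
    (h : ∀ v, ∃ c : K, f v = c • g v) : ∃ c : K, f = c • g := by
  by_cases hg : g = 0
  · refine ⟨0, ext fun v ↦ ?_⟩
    obtain ⟨c, hc⟩ := h v
    simp [hc, hg]
  obtain ⟨v₀, hv₀⟩ : ∃ v₀, g v₀ ≠ 0 := by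
    by_contra! h0
    exact hg (ext h0)
  obtain ⟨c, hc⟩ := h v₀
  refine ⟨c, ext fun v ↦ ?_⟩
  rw [smul_apply]
  by_cases hdep : ∃ μ : K, g v = μ • g v₀
  · obtain ⟨μ, hμ⟩ := hdep
    obtain ⟨d, hd⟩ := h (v - μ • v₀)
    have hker : g (v - μ • v₀) = 0 := by simp [hμ]
    rw [hker, smul_zero, map_sub, map_smul, sub_eq_zero] at hd
    rw [hd, hc, hμ, smul_comm]
  · push Not at hdep
    obtain ⟨a, ha⟩ := h v
    obtain ⟨b, hb⟩ := h (v + v₀)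
    -- comparing the two expansions of `f (v + v₀)` gives a linear relation between `g v` and `g v₀`
    have hrel : (a - b) • g v = (b - c) • g v₀ := by
      rw [map_add, map_add, ha, hc, smul_add] at hb
      rw [sub_smul, sub_smul, sub_eq_sub_iff_add_eq_add, hb, add_comm]
    have hab : a = b := by
      by_contra hab
      apply hdep ((a - b)⁻¹ * (b - c))
      rw [mul_smul, ← hrel, smul_smul, inv_mul_cancel₀ (sub_ne_zero.mpr hab), one_smul]
    rw [hab, sub_self, zero_smul, eq_comm, smul_eq_zero] at hrel
    rw [ha, hab, sub_eq_zero.mp (hrel.resolve_right hv₀)]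

namespace Matrix

variable {ι K : Type*} [Fintype ι] [DecidableEq ι] [Field K]

theorem eq_zero_of_isIdempotentElem_of_trace_eq_zero_s9 [CharZero K] {P : Matrix ι ι K}
    (hP : IsIdempotentElem P) (htr : P.trace = 0) : P = 0 := by
  have hlin := LinearMap.IsIdempotentElem.eq_zero_of_trace_eq_zero
    (hP.map (toLinAlgEquiv' (R := K))) ((trace_toLin'_eq P).trans htr)
  exact (map_eq_zero_iff _ toLinAlgEquiv'.injective).mp hlin

theorem eq_zero_of_eq_smul_mul_mul [CharZero K] {A J : Matrix ι ι K} {c : K}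
    (hA : A = c • (A * J * A)) (htr : trace (J * A) = 0) : A = 0 := by
  set P := c • (J * A)
  have hP : IsIdempotentElem P := by
    calc P * P = c • (J * (c • (A * J * A))) := by
          simp only [P, Matrix.smul_mul, Matrix.mul_smul, Matrix.mul_assoc]
      _ = P := by rw [← hA]
  have hP0 : P = 0 := eq_zero_of_isIdempotentElem_of_trace_eq_zero_s9 hP (by simp [P, htr])
  calc A = c • (A * J * A) := hA
    _ = A * P := by simp only [P, Matrix.mul_smul, Matrix.mul_assoc]
    _ = 0 := by rw [hP0, Matrix.mul_zero]

theorem exists_eq_smul_of_dotProduct_mulVec_eq_zero_imp {m n : Type*} [Fintype m] [DecidableEq m]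
    [Fintype n] [DecidableEq n] {A B : Matrix m n K}
    (h : ∀ u v, u ⬝ᵥ B *ᵥ v = 0 → u ⬝ᵥ A *ᵥ v = 0) : ∃ c : K, A = c • B := by
  have hrow : ∀ u, ∃ c : K, toLinearMap₂' K A u = c • toLinearMap₂' K B u := fun u ↦
    LinearMap.exists_eq_smul_of_ker_le fun v hv ↦ by
      rw [LinearMap.mem_ker, toLinearMap₂'_apply'] at hv ⊢
      exact h u v hv
  obtain ⟨c, hc⟩ := LinearMap.exists_eq_smul_of_forall_exists_eq_smul hrow
  exact ⟨c, (toLinearMap₂' K).injective (by rw [hc, map_smul])⟩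

end Matrix

theorem stmt_9_general (F : Type*) [Field F] [CharZero F]
    (n : ℕ) (J A : Matrix (Fin n) (Fin n) F)
    (hAskew : Aᵀ = -A) (hA : A ≠ 0) (htr : trace (J * A) = 0) :
    ∃ u v : Fin n → F,
      u ⬝ᵥ (A *ᵥ v) ≠ 0 ∧ (A *ᵥ u) ⬝ᵥ (J *ᵥ (A *ᵥ v)) = 0 := by
  have hform : ∀ u v, (A *ᵥ u) ⬝ᵥ (J *ᵥ (A *ᵥ v)) = -(u ⬝ᵥ (A * J * A) *ᵥ v) := by
    intro u v
    rw [← vecMul_transpose, hAskew, ← dotProduct_mulVec]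
    simp [Matrix.mulVec_mulVec, neg_mulVec, Matrix.mul_assoc]
  by_contra! hcon
  obtain ⟨c, hc⟩ := exists_eq_smul_of_dotProduct_mulVec_eq_zero_imp (A := A) (B := A * J * A)
    fun u v hB ↦ by
      by_contra hAuv
      exact hcon u v hAuv (by rw [hform, hB, neg_zero])
  exact hA (eq_zero_of_eq_smul_mul_mul hc htr)

/-- Let `n` be even, `J` an invertible skew-symmetric `n×n` matrix, and `A` a
nonzero skew-symmetric `n×n` matrix with `trace(J·A) = 0`. Then there exist vectors
`u, v ∈ 𝔽ⁿ` with `uᵀ A v ≠ 0` and `(A u)ᵀ J (A v) = 0`. -/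
theorem stmt_9 (F : Type*) [Field F] [CharZero F] [IsAlgClosed F]
    (n : ℕ) (hn : Even n) (J A : Matrix (Fin n) (Fin n) F)
    (hJskew : Jᵀ = -J) (hJinv : IsUnit J)
    (hAskew : Aᵀ = -A) (hA : A ≠ 0) (htr : trace (J * A) = 0) :
    ∃ u v : Fin n → F,
      u ⬝ᵥ (A *ᵥ v) ≠ 0 ∧ (A *ᵥ u) ⬝ᵥ (J *ᵥ (A *ᵥ v)) = 0 :=
  stmt_9_general F n J A hAskew hA htr
end

section
/- Let V and W be finite-dimensional 𝔽-vector spaces and let f, g : V → W be linear maps such that for every v ∈ V the vectors f(v) and g(v) are linearly dependent. Then one of the following holds: (a) there exist a linear map h : V → W and scalars a, b ∈ 𝔽 with f = a·h and g = b·h; or (b) there exists a vector w ∈ W such that the images of both f and g are contained in the line 𝔽·w. -/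
/-!
If `f` has two linearly independent values `f u₁, f u₂`, subtract from `g` the multiple `c • f`
that vanishes at `u₁`; the difference `k` is still pointwise proportional to `f`. Whenever `k`
vanishes at `u` and not at `v`, comparing `v` with `v + u` puts `f u` on the line `𝔽 · k v`.
This first forces `k u₂ = 0`, and then `k = 0`, since `f u₁, f u₂` cannot share a line.
Otherwise all values of `f` lie on a line `𝔽 · f u`, and so do those of `g`: at `v` with
`f v ≠ 0` directly, and at `v ∈ ker f` through `g v = g (v + u) - g u`.
-/

open Submodule

section Pair

variable {K M : Type*} [Field K] [AddCommGroup M] [Module K M] {x y z : M}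

theorem mem_span_singleton_of_not_linearIndependent_pair
    (h : ¬ LinearIndependent K ![x, y]) (hx : x ≠ 0) : y ∈ K ∙ x := by
  rw [LinearIndependent.pair_iff' hx] at h
  push Not at h
  exact mem_span_singleton.mpr h

theorem not_linearIndependent_pair_of_mem_span_singleton
    (hx : x ∈ K ∙ z) (hy : y ∈ K ∙ z) : ¬ LinearIndependent K ![x, y] := by
  intro hxy
  have hx0 : x ≠ 0 := by simpa using hxy.ne_zero 0
  obtain ⟨a, rfl⟩ := mem_span_singleton.mp hx
  obtain ⟨b, rfl⟩ := mem_span_singleton.mp hy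
  have ha : a ≠ 0 := by rintro rfl; simp at hx0
  refine (LinearIndependent.pair_iff' hx0).mp hxy (b / a) ?_
  rw [smul_smul, div_mul_cancel₀ b ha]

end Pair

namespace LinearMap

variable {K V W : Type*} [Field K] [AddCommGroup V] [Module K V] [AddCommGroup W] [Module K W]
  {f g : V →ₗ[K] W}

theorem mem_span_singleton_apply_of_apply_eq_zero
    (hdep : ∀ v, ¬ LinearIndependent K ![f v, g v]) {u v : V} (hu : g u = 0) (hv : g v ≠ 0) :
    f u ∈ K ∙ g v := by
  have hspan : ∀ w, g w = g v → f w ∈ K ∙ g v := fun w hw ↦ by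
    rw [← hw]
    exact mem_span_singleton_of_not_linearIndependent_pair
      (LinearIndependent.pair_symm_iff.not.mp (hdep w)) (hw ▸ hv)
  have hvu : f (v + u) ∈ K ∙ g v := hspan _ (by rw [map_add, hu, add_zero])
  simpa using sub_mem hvu (hspan v rfl)

theorem exists_eq_smul_of_linearIndependent_pair_apply
    (hdep : ∀ v, ¬ LinearIndependent K ![f v, g v]) {u₁ u₂ : V}
    (hind : LinearIndependent K ![f u₁, f u₂]) : ∃ c : K, g = c • f := by
  have hu₁ : f u₁ ≠ 0 := by simpa using hind.ne_zero 0
  have hu₂ : f u₂ ≠ 0 := by simpa using hind.ne_zero 1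
  obtain ⟨c, hc⟩ := mem_span_singleton.mp
    (mem_span_singleton_of_not_linearIndependent_pair (hdep u₁) hu₁)
  set k := g - c • f with hk_def
  have hk : ∀ v, ¬ LinearIndependent K ![f v, k v] := fun v ↦ by
    simpa [hk_def, sub_eq_neg_add, ← neg_smul] using hdep v
  have hk₁ : k u₁ = 0 := by simp [hk_def, hc]
  have hk₂ : k u₂ = 0 := by
    by_contra hne
    have h₁ : f u₁ ∈ K ∙ f u₂ := span_singleton_le_iff_mem _ _ |>.mpr
      (mem_span_singleton_of_not_linearIndependent_pair (hk u₂) hu₂)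
      (mem_span_singleton_apply_of_apply_eq_zero hk hk₁ hne)
    exact not_linearIndependent_pair_of_mem_span_singleton h₁ (mem_span_singleton_self _) hind
  have hk0 : k = 0 := by
    ext v
    by_contra hne
    exact not_linearIndependent_pair_of_mem_span_singleton
      (mem_span_singleton_apply_of_apply_eq_zero hk hk₁ hne)
      (mem_span_singleton_apply_of_apply_eq_zero hk hk₂ hne) hind
  exact ⟨c, sub_eq_zero.mp hk0⟩

theorem apply_mem_span_singleton_of_forall_apply_mem
    (hdep : ∀ v, ¬ LinearIndependent K ![f v, g v]) {u : V} (hu : f u ≠ 0)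
    (hf : ∀ v, f v ∈ K ∙ f u) (v : V) : g v ∈ K ∙ f u := by
  have hne : ∀ w, f w ≠ 0 → g w ∈ K ∙ f u := fun w hw ↦
    span_singleton_le_iff_mem _ _ |>.mpr (hf w)
      (mem_span_singleton_of_not_linearIndependent_pair (hdep w) hw)
  by_cases hv : f v = 0
  · have hvu : g (v + u) ∈ K ∙ f u := hne _ (by rwa [map_add, hv, zero_add])
    simpa using sub_mem hvu (hne u hu)
  · exact hne v hv

end LinearMap

theorem stmt_12_general (F : Type*) [Field F]
    (V W : Type*) [AddCommGroup V] [Module F V] [AddCommGroup W] [Module F W]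
    (f g : V →ₗ[F] W)
    (h : ∀ v : V, ¬ LinearIndependent F ![f v, g v]) :
    (∃ (h' : V →ₗ[F] W) (a b : F), f = a • h' ∧ g = b • h') ∨
    (∃ w : W, (∀ v, f v ∈ Submodule.span F {w}) ∧ (∀ v, g v ∈ Submodule.span F {w})) := by
  by_cases hf : f = 0
  · exact Or.inl ⟨g, 0, 1, by simp [hf], by simp⟩
  by_cases hrank : ∃ u₁ u₂, LinearIndependent F ![f u₁, f u₂]
  · obtain ⟨u₁, u₂, hind⟩ := hrank
    obtain ⟨c, hc⟩ := LinearMap.exists_eq_smul_of_linearIndependent_pair_apply h hind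
    exact Or.inl ⟨f, 1, c, by simp, hc⟩
  push Not at hrank
  obtain ⟨u, hu⟩ : ∃ u, f u ≠ 0 := by
    by_contra! h0
    exact hf (LinearMap.ext h0)
  have hline : ∀ v, f v ∈ F ∙ f u :=
    fun v ↦ mem_span_singleton_of_not_linearIndependent_pair (hrank u v) hu
  exact Or.inr ⟨f u, hline, LinearMap.apply_mem_span_singleton_of_forall_apply_mem h hu hline⟩

/-- If `f, g : V → W` are linear maps such that `f(v)` and `g(v)` are linearly
dependent for every `v`, then either `f = a·h` and `g = b·h` for a common linear map `h` and
scalars `a, b`, or the images of `f` and `g` are both contained in a single line `𝔽·w`. -/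
theorem stmt_12 (F : Type*) [Field F] [CharZero F] [IsAlgClosed F]
    (V W : Type*) [AddCommGroup V] [Module F V] [AddCommGroup W] [Module F W]
    [FiniteDimensional F V] [FiniteDimensional F W]
    (f g : V →ₗ[F] W)
    (h : ∀ v : V, ¬ LinearIndependent F ![f v, g v]) :
    (∃ (h' : V →ₗ[F] W) (a b : F), f = a • h' ∧ g = b • h') ∨
    (∃ w : W, (∀ v, f v ∈ Submodule.span F {w}) ∧ (∀ v, g v ∈ Submodule.span F {w})) :=
  stmt_12_general F V W f g h
end

section
/- Let f be a nonzero homogeneous polynomial of degree d ≥ 1 in n variables over 𝔽, with zero locus Z_f = {z ∈ 𝔽ⁿ : f(z) = 0}, and let X ⊆ 𝔽ⁿ be a subset that spans 𝔽ⁿ and is closed under scalar multiplication (in particular 0 ∈ X). Then 𝔽ⁿ = Z_f + X: for every v ∈ 𝔽ⁿ there exist z ∈ Z_f and x ∈ X such that v = z + x. -/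
open MvPolynomial Polynomial in
lemma aux_chain {F : Type*} [CommRing F] {n : ℕ} (g : Fin n → Polynomial F)
    (f : MvPolynomial (Fin n) F) :
    Polynomial.derivative (MvPolynomial.aeval g f) =
      ∑ i, MvPolynomial.aeval g (MvPolynomial.pderiv i f) * Polynomial.derivative (g i) := by
  induction f using MvPolynomial.induction_on with
  | C a => simp
  | add p q hp hq => simp [hp, hq, map_add, add_mul, Finset.sum_add_distrib]
  | mul_X p i hp =>
    simp only [map_mul, MvPolynomial.aeval_X, Polynomial.derivative_mul, hp,
      MvPolynomial.pderiv_mul, MvPolynomial.pderiv_X, map_add, add_mul,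
      Finset.sum_add_distrib, Finset.sum_mul, map_smul, map_one, Pi.single_apply]
    simp [mul_assoc, ite_smul, smul_ite, mul_ite, ite_mul, Finset.sum_ite_eq', mul_comm, mul_left_comm]

open MvPolynomial in
lemma aux_euler {F : Type*} [CommRing F] {n d : ℕ}
    (f : MvPolynomial (Fin n) F) (hhom : f.IsHomogeneous d) :
    ∑ i, MvPolynomial.X i * MvPolynomial.pderiv i f = d • f := by
  have key : ∀ m : Fin n →₀ ℕ, coeff m f ≠ 0 →
      ∑ i, MvPolynomial.X i * MvPolynomial.pderiv i (monomial m (coeff m f))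
        = d • monomial m (coeff m f) := by
    intro m hm
    have hdeg : ∑ i, m i = d := by
      have := hhom hm
      simpa [Finsupp.weight, Finsupp.linearCombination, Finsupp.sum_fintype] using this
    have step : ∀ i : Fin n, MvPolynomial.X i * MvPolynomial.pderiv i (monomial m (coeff m f))
        = monomial m (m i • coeff m f) := by
      intro i
      rw [pderiv_monomial]
      by_cases h : m i = 0
      · simp [h]
      · have hle : Finsupp.single i 1 + (m - Finsupp.single i 1) = m := by
          rw [add_tsub_cancel_of_le]
          exact Finsupp.single_le_iff.mpr (Nat.one_le_iff_ne_zero.mpr h)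
        rw [X, monomial_mul, hle]
        simp [smul_eq_mul, mul_comm]
    rw [Finset.sum_congr rfl fun i _ => step i]
    rw [← map_sum, ← Finset.sum_smul, hdeg, map_nsmul]
  conv_lhs => rw [f.as_sum]
  conv_rhs => rw [f.as_sum]
  rw [Finset.smul_sum]
  simp only [map_sum, Finset.mul_sum]
  rw [Finset.sum_comm]
  exact Finset.sum_congr rfl fun m hm => key m (mem_support_iff.mp hm)

open MvPolynomial in
lemma aux_evalc {F : Type*} [CommRing F] {n : ℕ} (g : Fin n → Polynomial F)
    (q : MvPolynomial (Fin n) F) (t : F) :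
    Polynomial.eval t (MvPolynomial.aeval g q) =
      MvPolynomial.eval (fun i => Polynomial.eval t (g i)) q := by
  induction q using MvPolynomial.induction_on with
  | C a => simp
  | add p q hp hq => simp [hp, hq]
  | mul_X p i hp => simp [hp]

open MvPolynomial in
/-- If `f` is a nonzero homogeneous polynomial of degree `d ≥ 1` on `𝔽ⁿ` with
zero locus `Z_f`, and `X ⊆ 𝔽ⁿ` spans `𝔽ⁿ` and is closed under scalar multiplication, then
`𝔽ⁿ = Z_f + X`. -/
theorem stmt_14 (F : Type*) [Field F] [CharZero F] [IsAlgClosed F]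
    (n d : ℕ) (hd : 1 ≤ d)
    (f : MvPolynomial (Fin n) F) (hf : f ≠ 0) (hhom : f.IsHomogeneous d)
    (X : Set (Fin n → F)) (hspan : Submodule.span F X = ⊤)
    (hscalar : ∀ (c : F), ∀ x ∈ X, c • x ∈ X) :
    ∀ v : Fin n → F, ∃ z x : Fin n → F,
      MvPolynomial.eval z f = 0 ∧ x ∈ X ∧ v = z + x := by
  -- a nonzero coefficient gives a monomial of degree d ≥ 1, hence a variable exists
  have hne : Nonempty (Fin n) := by
    obtain ⟨m, hm⟩ := MvPolynomial.ne_zero_iff.mp hf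
    have hdeg : ∑ i, m i = d := by
      have := hhom hm
      simpa [Finsupp.weight, Finsupp.linearCombination, Finsupp.sum_fintype] using this
    by_contra h
    rw [not_nonempty_iff] at h
    simp only [Finset.univ_eq_empty, Finset.sum_empty] at hdeg
    omega
  have hX0 : (0 : Fin n → F) ∈ X := by
    obtain ⟨x₀, hx₀⟩ : X.Nonempty := by
      by_contra h
      rw [Set.not_nonempty_iff_eq_empty] at h
      rw [h, Submodule.span_empty] at hspan
      have : (0 : Fin n → F) = (fun _ => 1) := by
        have := hspan ▸ Submodule.mem_top (R := F) (M := Fin n → F) (x := fun _ => 1)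
        simpa [eq_comm] using this
      have := congrFun this hne.some
      simp at this
    simpa using hscalar 0 x₀ hx₀
  intro v
  by_cases hv : MvPolynomial.eval v f = 0
  · exact ⟨v, 0, hv, hX0, by simp⟩
  -- gradient functional
  set w : Fin n → F := fun i => MvPolynomial.eval v (MvPolynomial.pderiv i f) with hw
  have hLv : ∑ i, v i * w i ≠ 0 := by
    have h1 : ∑ i, v i * w i = (d : F) * MvPolynomial.eval v f := by
      have := congrArg (MvPolynomial.eval v) (aux_euler f hhom)
      simpa [map_sum, hw, nsmul_eq_mul] using this
    rw [h1]
    exact mul_ne_zero (Nat.cast_ne_zero.mpr (by omega)) hv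
  obtain ⟨x, hxX, hLx⟩ : ∃ x ∈ X, ∑ i, x i * w i ≠ 0 := by
    by_contra h
    push_neg at h
    set L : (Fin n → F) →ₗ[F] F :=
      { toFun := fun x => ∑ i, x i * w i
        map_add' := by intro a b; simp [add_mul, Finset.sum_add_distrib]
        map_smul' := by intro c a; simp [Finset.mul_sum, mul_assoc] }
    have hker : Submodule.span F X ≤ LinearMap.ker L := by
      rw [Submodule.span_le]
      intro x hx
      exact h x hx
    rw [hspan, top_le_iff] at hker
    have : L v = 0 := by rw [← LinearMap.mem_ker, hker]; trivial
    exact hLv this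
  -- the one-variable polynomial
  set g : Fin n → Polynomial F := fun i => Polynomial.C (v i) + Polynomial.C (x i) * Polynomial.X
    with hg
  set p : Polynomial F := MvPolynomial.aeval g f with hp
  have hda : Polynomial.derivative p ≠ 0 := by
    intro h0
    have h1 : Polynomial.eval 0 (Polynomial.derivative p) = ∑ i, x i * w i := by
      rw [hp, aux_chain]
      simp only [Polynomial.eval_finset_sum, Polynomial.eval_mul]
      refine Finset.sum_congr rfl fun i _ => ?_
      rw [aux_evalc]
      have e1 : (fun j => Polynomial.eval 0 (g j)) = v := by funext j; simp [hg]
      rw [e1, mul_comm]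
      congr 1
      simp [hg]
    rw [h0] at h1
    simp at h1
    exact hLx h1.symm
  have hpdeg : p.degree ≠ 0 := by
    intro h0
    have := Polynomial.eq_C_of_degree_le_zero (le_of_eq h0)
    rw [this] at hda
    simp at hda
  obtain ⟨t, ht⟩ := IsAlgClosed.exists_root p hpdeg
  refine ⟨fun i => v i + x i * t, (-t) • x, ?_, hscalar (-t) x hxX, ?_⟩
  · have h2 := aux_evalc g f t
    rw [hp, Polynomial.IsRoot] at ht
    rw [ht] at h2
    rw [show (fun i => v i + x i * t) = (fun i => Polynomial.eval t (g i)) from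
      funext fun i => by simp [hg]]
    exact h2.symm
  · funext i
    simp
    ring
end

section
/- Let V be a finite-dimensional 𝔽-vector space with a nondegenerate symmetric bilinear form B, and let x₁, x₂, y₁, y₂ ∈ V be such that span{x₁,x₂} and span{y₁,y₂} are two-dimensional subspaces on which B vanishes identically (two-dimensional isotropic subspaces). Let L : V → V be the linear map L(v) = B(x₂,v)·x₁ − B(x₁,v)·x₂ + B(y₂,v)·y₁ − B(y₁,v)·y₂ (the operator associated to ω = x₁∧x₂ + y₁∧y₂), let W = Im L, and let ρ be the rank of the restriction of B to W. Then the pair (dim W, ρ) is one of the following six: (4,4), (4,2), (4,0), (2,1), (2,0), (0,0). In particular, if dim W = 4 then ρ is even, and if dim W = 2 then ρ ≤ 1. -/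
/-!
Through `B`, `a ∧ b` acts on `V` as `w ↦ B(b, w) a - B(a, w) b`. For independent `a, b` its
kernel is `span{a, b}^⊥`, so by nondegeneracy its image is all of `span{a, b}`. Write
`X = span{x₁, x₂}` and `Y = span{y₁, y₂}`.

If `X ∩ Y = 0`, then `W = X ⊕ Y`. As `X` and `Y` are isotropic, the radical of `B|_W` is
`(X ∩ Y^⊥) ⊕ (Y ∩ X^⊥)`, and the two summands have the same dimension: taking orthogonals in
`V` turns `X + Y^⊥` into `X^⊥ ∩ Y`. Hence `ρ = 4 - 2k` with `k = dim (X ∩ Y^⊥) ≤ 2`.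

If `X ∩ Y` contains `v ≠ 0`, then `ω = v ∧ z` with `z ⊥ v`, so `W` is `0` or the plane
`span{v, z}`, in whose radical `v` lies; hence `ρ ≤ 1`.
-/

open Module Submodule

lemma linearIndependent_pair_of_finrank_span_eq_two {K V : Type*} [Field K] [AddCommGroup V]
    [Module K V] {a b : V} (h : finrank K (span K {a, b}) = 2) : LinearIndependent K ![a, b] := by
  rw [linearIndependent_iff_card_eq_finrank_span, Matrix.range_cons_cons_empty]
  exact h.symm

namespace LinearMap.BilinForm

variable {K V : Type*} [Field K] [AddCommGroup V] [Module K V] (B : LinearMap.BilinForm K V)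

lemma orthogonal_sup (X Y : Submodule K V) :
    B.orthogonal (X ⊔ Y) = B.orthogonal X ⊓ B.orthogonal Y := by
  refine le_antisymm (le_inf (orthogonal_le le_sup_left) (orthogonal_le le_sup_right)) ?_
  rintro w ⟨hX, hY⟩ n hn
  obtain ⟨a, ha, b, hb, rfl⟩ := mem_sup.1 hn
  simp only [map_add, LinearMap.add_apply, hX a ha, hY b hb, add_zero]

lemma mem_orthogonal_span_pair {a b w : V} :
    w ∈ B.orthogonal (span K {a, b}) ↔ B a w = 0 ∧ B b w = 0 := by
  refine ⟨fun h => ⟨h a (subset_span (by simp)), h b (subset_span (by simp))⟩, ?_⟩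
  rintro ⟨ha, hb⟩ n hn
  obtain ⟨p, q, rfl⟩ := mem_span_pair.1 hn
  simp [ha, hb]

lemma inf_orthogonal_sup_eq_of_le_orthogonal {X Y : Submodule K V}
    (hX : X ≤ B.orthogonal X) (hY : Y ≤ B.orthogonal Y) :
    (X ⊔ Y) ⊓ B.orthogonal (X ⊔ Y) = X ⊓ B.orthogonal Y ⊔ Y ⊓ B.orthogonal X := by
  rw [orthogonal_sup, ← inf_assoc, sup_inf_assoc_of_le Y hX, sup_comm X,
    sup_inf_assoc_of_le X (inf_le_left.trans hY), sup_comm]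

-- `a ∧ b ∈ Λ²V`, viewed as an endomorphism of `V` through `B`.
def wedgeEnd (a b : V) : V →ₗ[K] V := (B b).smulRight a - (B a).smulRight b

@[simp]
lemma wedgeEnd_apply (a b w : V) : B.wedgeEnd a b w = B b w • a - B a w • b := rfl

lemma wedgeEnd_smul_add_smul_right (v x y : V) (c d : K) :
    B.wedgeEnd v (c • x + d • y) = c • B.wedgeEnd v x + d • B.wedgeEnd v y := by
  ext w
  simp only [wedgeEnd_apply, map_add, map_smul, LinearMap.add_apply, LinearMap.smul_apply,
    smul_eq_mul]
  module

lemma wedgeEnd_eq_smul_of_mem_span_pair {v x a b : V} (ha : a ∈ span K {v, x})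
    (hb : b ∈ span K {v, x}) : ∃ c : K, B.wedgeEnd a b = c • B.wedgeEnd v x := by
  obtain ⟨p, q, rfl⟩ := mem_span_pair.1 ha
  obtain ⟨r, s, rfl⟩ := mem_span_pair.1 hb
  refine ⟨p * s - q * r, ?_⟩
  ext w
  simp only [wedgeEnd_apply, map_add, map_smul, LinearMap.add_apply, LinearMap.smul_apply,
    smul_eq_mul]
  module

lemma range_wedgeEnd_le (a b : V) : range (B.wedgeEnd a b) ≤ span K {a, b} := by
  rintro _ ⟨w, rfl⟩
  exact sub_mem (smul_mem _ _ (subset_span (by simp))) (smul_mem _ _ (subset_span (by simp)))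

lemma ker_wedgeEnd {a b : V} (hab : LinearIndependent K ![a, b]) :
    ker (B.wedgeEnd a b) = B.orthogonal (span K {a, b}) := by
  ext w
  rw [mem_ker, wedgeEnd_apply, mem_orthogonal_span_pair]
  refine ⟨fun h => ?_, fun ⟨ha, hb⟩ => by simp [ha, hb]⟩
  obtain ⟨hb, ha⟩ := LinearIndependent.pair_iff.1 hab (B b w) (-B a w)
    (by rw [neg_smul, ← sub_eq_add_neg, h])
  exact ⟨neg_eq_zero.1 ha, hb⟩

section FiniteDimensional

variable [FiniteDimensional K V]

lemma finrank_inf_orthogonal_add_finrank (hB : B.Nondegenerate) (hB₀ : B.IsRefl)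
    (X Y : Submodule K V) :
    finrank K ↥(X ⊓ B.orthogonal Y) + finrank K Y =
      finrank K ↥(Y ⊓ B.orthogonal X) + finrank K X := by
  have hperp : B.orthogonal (X ⊔ B.orthogonal Y) = Y ⊓ B.orthogonal X := by
    rw [orthogonal_sup, orthogonal_orthogonal hB hB₀, inf_comm]
  have hsup := finrank_sup_add_finrank_inf_eq X (B.orthogonal Y)
  have hsup_perp := finrank_orthogonal hB (X ⊔ B.orthogonal Y)
  rw [hperp] at hsup_perp
  have hY_perp := finrank_orthogonal hB Y
  have := Submodule.finrank_le (X ⊔ B.orthogonal Y)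
  have := Submodule.finrank_le Y
  omega

lemma finrank_inf_orthogonal_sup (hB : B.Nondegenerate) (hB₀ : B.IsRefl)
    {X Y : Submodule K V} (hX : X ≤ B.orthogonal X) (hY : Y ≤ B.orthogonal Y)
    (hXY : Disjoint X Y) (hdim : finrank K X = finrank K Y) :
    finrank K ↥((X ⊔ Y) ⊓ B.orthogonal (X ⊔ Y)) =
      2 * finrank K ↥(X ⊓ B.orthogonal Y) := by
  have hdisj : X ⊓ B.orthogonal Y ⊓ (Y ⊓ B.orthogonal X) = ⊥ :=
    eq_bot_iff.2 ((inf_le_inf inf_le_left inf_le_left).trans hXY.le_bot)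
  have hsum := finrank_sup_add_finrank_inf_eq (X ⊓ B.orthogonal Y) (Y ⊓ B.orthogonal X)
  rw [hdisj, finrank_bot] at hsum
  have := B.finrank_inf_orthogonal_add_finrank hB hB₀ X Y
  rw [B.inf_orthogonal_sup_eq_of_le_orthogonal hX hY]
  omega

lemma range_eq_of_ker_le_orthogonal (hB : B.Nondegenerate) {f : V →ₗ[K] V}
    {U : Submodule K V} (hr : range f ≤ U) (hk : ker f ≤ B.orthogonal U) : range f = U := by
  refine eq_of_le_of_finrank_le hr ?_
  have := f.finrank_range_add_finrank_ker
  have := finrank_orthogonal hB U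
  have := Submodule.finrank_mono hk
  have := Submodule.finrank_le U
  omega

lemma range_wedgeEnd (hB : B.Nondegenerate) {a b : V} (hab : LinearIndependent K ![a, b]) :
    range (B.wedgeEnd a b) = span K {a, b} :=
  B.range_eq_of_ker_le_orthogonal hB (B.range_wedgeEnd_le a b) (B.ker_wedgeEnd hab).le

lemma range_wedgeEnd_add_wedgeEnd (hB : B.Nondegenerate) {a b c d : V}
    (hab : LinearIndependent K ![a, b]) (hcd : LinearIndependent K ![c, d])
    (hdisj : Disjoint (span K {a, b}) (span K {c, d})) :
    range (B.wedgeEnd a b + B.wedgeEnd c d) = span K {a, b} ⊔ span K {c, d} := by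
  refine B.range_eq_of_ker_le_orthogonal hB ?_ ?_
  · rintro _ ⟨w, rfl⟩
    exact add_mem_sup (B.range_wedgeEnd_le a b ⟨w, rfl⟩) (B.range_wedgeEnd_le c d ⟨w, rfl⟩)
  · intro w hw
    rw [mem_ker, LinearMap.add_apply, add_eq_zero_iff_eq_neg] at hw
    have hab0 : B.wedgeEnd a b w = 0 := disjoint_def.1 hdisj _
      (B.range_wedgeEnd_le a b ⟨w, rfl⟩) (hw ▸ neg_mem (B.range_wedgeEnd_le c d ⟨w, rfl⟩))
    have hcd0 : B.wedgeEnd c d w = 0 := by rwa [hab0, zero_eq_neg] at hw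
    rw [orthogonal_sup, ← B.ker_wedgeEnd hab, ← B.ker_wedgeEnd hcd]
    exact ⟨hab0, hcd0⟩

lemma exists_wedgeEnd_eq_smul {P : Submodule K V} (hP : finrank K P = 2) {v a b : V}
    (hv : v ∈ P) (hv0 : v ≠ 0) (ha : a ∈ P) (hb : b ∈ P) :
    ∃ x ∈ P, ∃ c : K, B.wedgeEnd a b = c • B.wedgeEnd v x := by
  obtain ⟨x, hxP, hxv⟩ : ∃ x ∈ P, x ∉ span K {v} := by
    refine SetLike.exists_of_lt (lt_of_le_of_ne ((span_singleton_le_iff_mem v P).2 hv) ?_)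
    rintro rfl
    rw [finrank_span_singleton hv0] at hP
    exact absurd hP (by norm_num)
  have hind : LinearIndependent K ![v, x] := (LinearIndependent.pair_iff' hv0).2
    fun c hc => hxv (hc ▸ smul_mem _ c (mem_span_singleton_self v))
  have hPeq : span K {v, x} = P := by
    refine eq_of_le_of_finrank_eq (span_le.2 (Set.insert_subset_iff.2
      ⟨hv, Set.singleton_subset_iff.2 hxP⟩)) ?_
    rw [hP, ← Matrix.range_cons_cons_empty v x ![], finrank_span_eq_card hind, Fintype.card_fin]
  exact ⟨x, hxP, B.wedgeEnd_eq_smul_of_mem_span_pair (hPeq ▸ ha) (hPeq ▸ hb)⟩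

lemma finrank_range_wedgeEnd_of_isotropic (hB : B.Nondegenerate) (hB₀ : B.IsRefl) {v z : V}
    (hv0 : v ≠ 0) (hvv : B v v = 0) (hvz : B v z = 0) :
    finrank K (range (B.wedgeEnd v z)) = 0 ∨
      finrank K (range (B.wedgeEnd v z)) = 2 ∧
        1 ≤ finrank K ↥(range (B.wedgeEnd v z) ⊓ B.orthogonal (range (B.wedgeEnd v z))) := by
  by_cases hind : LinearIndependent K ![v, z]
  · right
    rw [B.range_wedgeEnd hB hind]
    refine ⟨by rw [← Matrix.range_cons_cons_empty v z ![], finrank_span_eq_card hind,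
      Fintype.card_fin], one_le_finrank_iff.2 ((Submodule.ne_bot_iff _).2 ⟨v, ?_, hv0⟩)⟩
    exact ⟨subset_span (by simp), B.mem_orthogonal_span_pair.2 ⟨hvv, hB₀ _ _ hvz⟩⟩
  · left
    obtain ⟨c, rfl⟩ : ∃ c : K, c • v = z := by
      simpa [LinearIndependent.pair_iff' hv0] using hind
    have hzero : B.wedgeEnd v (c • v) = 0 := by
      ext w
      simp [smul_smul, mul_comm]
    rw [hzero, LinearMap.range_zero, finrank_bot]

lemma finrank_range_wedgeEnd_add_wedgeEnd_of_disjoint (hB : B.Nondegenerate)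
    (hB₀ : B.IsRefl) {a b c d : V} (hab : finrank K (span K {a, b}) = 2)
    (hcd : finrank K (span K {c, d}) = 2)
    (hab_iso : span K {a, b} ≤ B.orthogonal (span K {a, b}))
    (hcd_iso : span K {c, d} ≤ B.orthogonal (span K {c, d}))
    (hdisj : Disjoint (span K {a, b}) (span K {c, d})) :
    finrank K (range (B.wedgeEnd a b + B.wedgeEnd c d)) = 4 ∧
      ∃ k ≤ 2, finrank K ↥(range (B.wedgeEnd a b + B.wedgeEnd c d) ⊓
        B.orthogonal (range (B.wedgeEnd a b + B.wedgeEnd c d))) = 2 * k := by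
  rw [B.range_wedgeEnd_add_wedgeEnd hB (linearIndependent_pair_of_finrank_span_eq_two hab)
    (linearIndependent_pair_of_finrank_span_eq_two hcd) hdisj]
  refine ⟨?_, _, ?_,
    B.finrank_inf_orthogonal_sup hB hB₀ hab_iso hcd_iso hdisj (hab.trans hcd.symm)⟩
  · have := finrank_sup_add_finrank_inf_eq (span K {a, b}) (span K {c, d})
    rwa [hdisj.eq_bot, finrank_bot, hab, hcd] at this
  · exact hab ▸ Submodule.finrank_mono inf_le_left

lemma finrank_range_wedgeEnd_add_wedgeEnd_of_not_disjoint (hB : B.Nondegenerate)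
    (hB₀ : B.IsRefl) {a b c d : V} (hab : finrank K (span K {a, b}) = 2)
    (hcd : finrank K (span K {c, d}) = 2)
    (hab_iso : span K {a, b} ≤ B.orthogonal (span K {a, b}))
    (hcd_iso : span K {c, d} ≤ B.orthogonal (span K {c, d}))
    (hmeet : ¬Disjoint (span K {a, b}) (span K {c, d})) :
    finrank K (range (B.wedgeEnd a b + B.wedgeEnd c d)) = 0 ∨
      finrank K (range (B.wedgeEnd a b + B.wedgeEnd c d)) = 2 ∧
        1 ≤ finrank K ↥(range (B.wedgeEnd a b + B.wedgeEnd c d) ⊓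
          B.orthogonal (range (B.wedgeEnd a b + B.wedgeEnd c d))) := by
  obtain ⟨v, hvab, hvcd, hv0⟩ : ∃ v ∈ span K {a, b}, v ∈ span K {c, d} ∧ v ≠ 0 := by
    simpa [disjoint_def] using hmeet
  obtain ⟨x, hx, s, hs⟩ := B.exists_wedgeEnd_eq_smul (a := a) (b := b) hab hvab hv0
    (subset_span (by simp)) (subset_span (by simp))
  obtain ⟨y, hy, t, ht⟩ := B.exists_wedgeEnd_eq_smul (a := c) (b := d) hcd hvcd hv0
    (subset_span (by simp)) (subset_span (by simp))
  have hvz : B v (s • x + t • y) = 0 := by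
    simp [hab_iso hx v hvab, hcd_iso hy v hvcd]
  rw [hs, ht, ← wedgeEnd_smul_add_smul_right]
  exact B.finrank_range_wedgeEnd_of_isotropic hB hB₀ hv0 (hab_iso hvab v hvab) hvz

end FiniteDimensional

end LinearMap.BilinForm

open LinearMap.BilinForm

theorem stmt_15_general (F : Type*) [Field F]
    (V : Type*) [AddCommGroup V] [Module F V] [FiniteDimensional F V]
    (B : LinearMap.BilinForm F V) (hsymm : B.IsSymm) (hnd : B.Nondegenerate)
    (x₁ x₂ y₁ y₂ : V)
    (hxdim : Module.finrank F ↥(Submodule.span F {x₁, x₂}) = 2)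
    (hxiso : ∀ u ∈ Submodule.span F {x₁, x₂}, ∀ w ∈ Submodule.span F {x₁, x₂}, B u w = 0)
    (hydim : Module.finrank F ↥(Submodule.span F {y₁, y₂}) = 2)
    (hyiso : ∀ u ∈ Submodule.span F {y₁, y₂}, ∀ w ∈ Submodule.span F {y₁, y₂}, B u w = 0)
    (L : V →ₗ[F] V)
    (hL : ∀ v, L v = B x₂ v • x₁ - B x₁ v • x₂ + B y₂ v • y₁ - B y₁ v • y₂)
    (W : Submodule F V) (hW : W = LinearMap.range L)
    (rad : Submodule F V)
    (hrad : ∀ v, v ∈ rad ↔ v ∈ W ∧ ∀ w ∈ W, B v w = 0)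
    (ρ : ℕ) (hρ : ρ = Module.finrank F ↥W - Module.finrank F ↥rad) :
    (Module.finrank F ↥W, ρ) ∈
      ({(4,4), (4,2), (4,0), (2,1), (2,0), (0,0)} : Set (ℕ × ℕ)) ∧
    (Module.finrank F ↥W = 4 → Even ρ) ∧
    (Module.finrank F ↥W = 2 → ρ ≤ 1) := by
  have hX : span F {x₁, x₂} ≤ B.orthogonal (span F {x₁, x₂}) :=
    fun u hu w hw => hxiso w hw u hu
  have hY : span F {y₁, y₂} ≤ B.orthogonal (span F {y₁, y₂}) :=
    fun u hu w hw => hyiso w hw u hu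
  obtain rfl : rad = W ⊓ B.orthogonal W := by
    ext v
    rw [hrad, Submodule.mem_inf, mem_orthogonal_iff]
    simp only [hsymm.eq_iff]
  obtain rfl : W = LinearMap.range (B.wedgeEnd x₁ x₂ + B.wedgeEnd y₁ y₂) := by
    rw [hW]
    congr 1
    ext v
    rw [hL, LinearMap.add_apply, wedgeEnd_apply, wedgeEnd_apply, add_sub_assoc]
  subst hρ
  by_cases hXY : Disjoint (span F {x₁, x₂}) (span F {y₁, y₂})
  · obtain ⟨hdim, k, hk, hrad⟩ :=
      B.finrank_range_wedgeEnd_add_wedgeEnd_of_disjoint hnd hsymm.isRefl hxdim hydim hX hY hXY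
    rw [hdim, hrad]
    interval_cases k <;> simp [Nat.even_iff]
  · set W := LinearMap.range (B.wedgeEnd x₁ x₂ + B.wedgeEnd y₁ y₂)
    have hrad_le : finrank F ↥(W ⊓ B.orthogonal W) ≤ finrank F W := finrank_mono inf_le_left
    rcases B.finrank_range_wedgeEnd_add_wedgeEnd_of_not_disjoint hnd hsymm.isRefl hxdim hydim
      hX hY hXY with hdim | ⟨hdim, hrad⟩
    · rw [hdim] at hrad_le ⊢
      simp [Nat.le_zero.1 hrad_le]
    · rw [hdim] at hrad_le ⊢
      interval_cases finrank F ↥(W ⊓ B.orthogonal W) <;> simp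

/-- Let `B` be a nondegenerate symmetric bilinear form on `V`, and let
`span{x₁,x₂}` and `span{y₁,y₂}` be two-dimensional isotropic subspaces. For the operator
`L(v) = B(x₂,v)x₁ − B(x₁,v)x₂ + B(y₂,v)y₁ − B(y₁,v)y₂` associated to `ω = x₁∧x₂ + y₁∧y₂`,
with `W = Im L` and `ρ` the rank of the restriction of `B` to `W` (i.e. `dim W` minus the
dimension of the radical of `B|_W`), the pair `(dim W, ρ)` is one of
`(4,4), (4,2), (4,0), (2,1), (2,0), (0,0)`. In particular, if `dim W = 4` then `ρ` is even,
and if `dim W = 2` then `ρ ≤ 1`. -/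
theorem stmt_15 (F : Type*) [Field F] [CharZero F] [IsAlgClosed F]
    (V : Type*) [AddCommGroup V] [Module F V] [FiniteDimensional F V]
    (B : LinearMap.BilinForm F V) (hsymm : B.IsSymm) (hnd : B.Nondegenerate)
    (x₁ x₂ y₁ y₂ : V)
    (hxdim : Module.finrank F ↥(Submodule.span F {x₁, x₂}) = 2)
    (hxiso : ∀ u ∈ Submodule.span F {x₁, x₂}, ∀ w ∈ Submodule.span F {x₁, x₂}, B u w = 0)
    (hydim : Module.finrank F ↥(Submodule.span F {y₁, y₂}) = 2)
    (hyiso : ∀ u ∈ Submodule.span F {y₁, y₂}, ∀ w ∈ Submodule.span F {y₁, y₂}, B u w = 0)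
    (L : V →ₗ[F] V)
    (hL : ∀ v, L v = B x₂ v • x₁ - B x₁ v • x₂ + B y₂ v • y₁ - B y₁ v • y₂)
    (W : Submodule F V) (hW : W = LinearMap.range L)
    (rad : Submodule F V)
    (hrad : ∀ v, v ∈ rad ↔ v ∈ W ∧ ∀ w ∈ W, B v w = 0)
    (ρ : ℕ) (hρ : ρ = Module.finrank F ↥W - Module.finrank F ↥rad) :
    (Module.finrank F ↥W, ρ) ∈
      ({(4,4), (4,2), (4,0), (2,1), (2,0), (0,0)} : Set (ℕ × ℕ)) ∧
    (Module.finrank F ↥W = 4 → Even ρ) ∧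
    (Module.finrank F ↥W = 2 → ρ ≤ 1) :=
  stmt_15_general F V B hsymm hnd x₁ x₂ y₁ y₂ hxdim hxiso hydim hyiso L hL W hW rad hrad ρ hρ
end
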